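/- arXiv:2412.14002 — 3 statements merged into one kernel-verified Lean document; each statement's English description precedes it below -/
import Mathlib

section
/- Let S and A be positive integers, let γ ∈ (0,1), let P ∈ ℝ^{SA×S} be row-stochastic, and let Ξ = 1_A ⊗ I_S ∈ ℝ^{SA×S}. Then the S×S matrix (γP − Ξ)^⊤(γP − Ξ) is symmetric positive definite; in particular, for every right-hand side r ∈ ℝ^S the linear system (γP − Ξ)^⊤(γP − Ξ) V = r has a unique solution V ∈ ℝ^S. -/
open Matrix Filter Topology

noncomputable def eucNorm {ι : Type*} [Fintype ι] (x : ι → ℝ) : ℝ :=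
  Real.sqrt (∑ i, x i ^ 2)

def RowStochastic {m n : Type*} [Fintype n] (P : Matrix m n ℝ) : Prop :=
  (∀ i j, 0 ≤ P i j) ∧ ∀ i, ∑ j, P i j = 1

def Xi (S A : ℕ) : Matrix (Fin S × Fin A) (Fin S) ℝ :=
  Matrix.of fun p s' => if p.1 = s' then 1 else 0

def OccD (S A : ℕ) (γ : ℝ) (P : Matrix (Fin S × Fin A) (Fin S) ℝ)
    (ρ : Fin S → ℝ) : Set ((Fin S × Fin A) → ℝ) :=
  {d | (∀ p, 0 ≤ d p) ∧
    ∀ s, ∑ a, d (s, a) = (1 - γ) * ρ s + γ * ∑ p : Fin S × Fin A, P p s * d p}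

noncomputable def kappa (S A : ℕ) (γ σ : ℝ) (P : Matrix (Fin S × Fin A) (Fin S) ℝ)
    (ρ : Fin S → ℝ) (c w : (Fin S × Fin A) → ℝ)
    (V : Fin S → ℝ) (φ : (Fin S × Fin A) → ℝ) : ℝ :=
  -(σ / 2) * eucNorm (c + γ • P.mulVec V - (Xi S A).mulVec V - φ) ^ 2
    + ∑ p, w p * (c + γ • P.mulVec V - (Xi S A).mulVec V - φ) p
    + (1 - γ) * ∑ s, ρ s * V s

noncomputable def regObj {ι : Type*} [Fintype ι] (σ : ℝ) (c w d : ι → ℝ) : ℝ :=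
  (∑ p, c p * d p) + (1 / (2 * σ)) * eucNorm (d - w) ^ 2

lemma xi_mulVec (S A : ℕ) (x : Fin S → ℝ) (p : Fin S × Fin A) :
    (Xi S A).mulVec x p = x p.1 := by
  simp [Xi, mulVec, dotProduct]

lemma ker_trivial (S A : ℕ) (hS : 0 < S) (hA : 0 < A)
    (γ : ℝ) (hγ0 : 0 < γ) (hγ1 : γ < 1)
    (P : Matrix (Fin S × Fin A) (Fin S) ℝ) (hP : RowStochastic P)
    (x : Fin S → ℝ) (hx : (γ • P - Xi S A).mulVec x = 0) : x = 0 := by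
  haveI : Nonempty (Fin S) := ⟨⟨0, hS⟩⟩
  obtain ⟨s0, hs0⟩ := Finite.exists_max (fun s => |x s|)
  set m := |x s0| with hm
  have key : ∀ p : Fin S × Fin A, x p.1 = γ * (P.mulVec x) p := by
    intro p
    have := congrFun hx p
    simp only [sub_mulVec, smul_mulVec, Pi.zero_apply, Pi.sub_apply,
      Pi.smul_apply, smul_eq_mul, xi_mulVec] at this
    linarith
  have hbound : m ≤ γ * m := by
    have h2 : x s0 = γ * (P.mulVec x) (s0, ⟨0, hA⟩) := key (s0, ⟨0, hA⟩)
    calc m = |γ * (P.mulVec x) (s0, ⟨0, hA⟩)| := by rw [hm, h2]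
    _ = γ * |(P.mulVec x) (s0, ⟨0, hA⟩)| := by
        rw [abs_mul, abs_of_pos hγ0]
    _ ≤ γ * m := by
        refine mul_le_mul_of_nonneg_left ?_ hγ0.le
        calc |(P.mulVec x) (s0, ⟨0, hA⟩)| = |∑ s', P (s0, ⟨0, hA⟩) s' * x s'| := by
              simp [mulVec, dotProduct]
        _ ≤ ∑ s', |P (s0, ⟨0, hA⟩) s' * x s'| :=
              Finset.abs_sum_le_sum_abs _ _
        _ ≤ ∑ s' : Fin S, P (s0, ⟨0, hA⟩) s' * m := by
            refine Finset.sum_le_sum fun s' _ => ?_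
            rw [abs_mul, abs_of_nonneg (hP.1 _ _)]
            exact mul_le_mul_of_nonneg_left (hs0 s') (hP.1 _ _)
        _ = m := by rw [← Finset.sum_mul, hP.2 _, one_mul]
  have hm0 : m ≤ 0 := by nlinarith [abs_nonneg (x s0)]
  funext s
  have := hs0 s
  have : |x s| ≤ 0 := le_trans this hm0
  simpa [abs_nonpos_iff] using this

/-- (γP − Ξ)ᵀ(γP − Ξ) is symmetric positive definite, and
every linear system with this matrix has a unique solution. -/
theorem gram_posDef_and_unique_solution
    (S A : ℕ) (hS : 0 < S) (hA : 0 < A)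
    (γ : ℝ) (hγ0 : 0 < γ) (hγ1 : γ < 1)
    (P : Matrix (Fin S × Fin A) (Fin S) ℝ) (hP : RowStochastic P) :
    ((γ • P - Xi S A)ᵀ * (γ • P - Xi S A)).PosDef ∧
      ∀ r : Fin S → ℝ, ∃! V : Fin S → ℝ,
        ((γ • P - Xi S A)ᵀ * (γ • P - Xi S A)).mulVec V = r := by
  set M := γ • P - Xi S A with hM
  have hpd : (Mᵀ * M).PosDef := by
    refine posDef_iff_dotProduct_mulVec.mpr ⟨?_, ?_⟩
    · have := isHermitian_conjTranspose_mul_self M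
      rwa [conjTranspose_eq_transpose_of_trivial] at this
    · intro x hx
      have h1 : star x ⬝ᵥ (Mᵀ * M) *ᵥ x = (M *ᵥ x) ⬝ᵥ (M *ᵥ x) := by
        rw [star_trivial, ← mulVec_mulVec, dotProduct_mulVec, vecMul_transpose]
      rw [h1]
      have hMx : M *ᵥ x ≠ 0 := fun h =>
        hx (ker_trivial S A hS hA γ hγ0 hγ1 P hP x h)
      have hnn : 0 ≤ (M *ᵥ x) ⬝ᵥ (M *ᵥ x) :=
        Finset.sum_nonneg fun i _ => mul_self_nonneg _
      exact lt_of_le_of_ne hnn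
        (fun h => hMx (dotProduct_self_eq_zero.mp h.symm))
  refine ⟨hpd, fun r => ?_⟩
  have hu : IsUnit (Mᵀ * M) := hpd.isUnit
  have hinj := Matrix.mulVec_injective_iff_isUnit.mpr hu
  refine ⟨(Mᵀ * M)⁻¹ *ᵥ r, ?_, fun V hV => hinj ?_⟩
  · show (Mᵀ * M) *ᵥ ((Mᵀ * M)⁻¹ *ᵥ r) = r
    rw [mulVec_mulVec, Matrix.mul_nonsing_inv _ ((Matrix.isUnit_iff_isUnit_det _).mp hu),
      one_mulVec]
  · rw [hV, mulVec_mulVec, Matrix.mul_nonsing_inv _ ((Matrix.isUnit_iff_isUnit_det _).mp hu),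
      one_mulVec]
end

section
/- Let S and A be positive integers, γ ∈ (0,1), P ∈ ℝ^{SA×S} row-stochastic, ρ ∈ ℝ^S a probability vector, Ξ = 1_A ⊗ I_S, c ∈ ℝ^{SA}, σ > 0, and w ∈ ℝ^{SA}. Define κ(V,φ) = −(σ/2)‖c + γPV − ΞV − φ‖² + w^⊤(c + γPV − ΞV − φ) + (1−γ)ρ^⊤V. For every fixed φ ∈ ℝ^{SA}, the function V ↦ κ(V,φ) has a unique maximizer over ℝ^S, namely the unique solution V of the linear system (γP − Ξ)^⊤(γP − Ξ) V = (γP − Ξ)^⊤(w/σ − c + φ) + (1/σ)(1−γ)ρ. -/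
open Matrix Filter Topology

lemma eucNorm_sq' {ι : Type*} [Fintype ι] (x : ι → ℝ) : eucNorm x ^ 2 = ∑ i, x i ^ 2 := by
  rw [eucNorm, Real.sq_sqrt]
  exact Finset.sum_nonneg fun i _ => sq_nonneg _

lemma Xi_mulVec' {S A : ℕ} (V : Fin S → ℝ) (p : Fin S × Fin A) :
    (Xi S A).mulVec V p = V p.1 := by
  simp [Xi, Matrix.mulVec, dotProduct]

/-- The matrix `γ P − Ξ` has trivial kernel. -/
lemma M_inj' {S A : ℕ} (hS : 0 < S) (hA : 0 < A) {γ : ℝ} (hγ0 : 0 < γ) (hγ1 : γ < 1)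
    {P : Matrix (Fin S × Fin A) (Fin S) ℝ} (hP : RowStochastic P)
    (V : Fin S → ℝ) (h : (γ • P - Xi S A).mulVec V = 0) : V = 0 := by
  obtain ⟨s₀, -, hs₀⟩ := Finset.exists_max_image (Finset.univ : Finset (Fin S))
    (fun s => |V s|) ⟨⟨0, hS⟩, Finset.mem_univ _⟩
  have hzero : V s₀ = γ * ∑ s', P (⟨s₀, ⟨0, hA⟩⟩ : Fin S × Fin A) s' * V s' := by
    have := congrFun h (⟨s₀, ⟨0, hA⟩⟩ : Fin S × Fin A)
    rw [Matrix.sub_mulVec, Matrix.smul_mulVec] at this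
    simp only [Pi.zero_apply, Pi.sub_apply, Pi.smul_apply, smul_eq_mul] at this
    rw [Xi_mulVec'] at this
    simp only [Matrix.mulVec, dotProduct] at this
    linarith [this]
  have habs : |V s₀| = γ * |∑ s', P (⟨s₀, ⟨0, hA⟩⟩ : Fin S × Fin A) s' * V s'| := by
    rw [hzero, abs_mul, abs_of_pos hγ0]
  have hbound : |V s₀| ≤ γ * |V s₀| := by
    conv_lhs => rw [habs]
    refine mul_le_mul_of_nonneg_left ?_ hγ0.le
    calc |∑ s', P (⟨s₀, ⟨0, hA⟩⟩ : Fin S × Fin A) s' * V s'|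
        ≤ ∑ s', |P (⟨s₀, ⟨0, hA⟩⟩ : Fin S × Fin A) s' * V s'| :=
          Finset.abs_sum_le_sum_abs _ _
      _ ≤ ∑ s', P (⟨s₀, ⟨0, hA⟩⟩ : Fin S × Fin A) s' * |V s₀| := by
          refine Finset.sum_le_sum fun s' _ => ?_
          rw [abs_mul, abs_of_nonneg (hP.1 _ _)]
          exact mul_le_mul_of_nonneg_left (hs₀ s' (Finset.mem_univ _)) (hP.1 _ _)
      _ = |V s₀| := by rw [← Finset.sum_mul, hP.2 _, one_mul]
  have h0 : |V s₀| = 0 := by nlinarith [abs_nonneg (V s₀)]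
  funext s
  have hle := hs₀ s (Finset.mem_univ _)
  simp only [Pi.zero_apply]
  have : |V s| ≤ 0 := h0 ▸ hle
  exact abs_eq_zero.mp (le_antisymm this (abs_nonneg _))

lemma expand_all' {ι κ : Type*} [Fintype ι] [Fintype κ] (σ γ : ℝ)
    (a m u : ι → ℝ) (r v h : κ → ℝ) :
    -(σ/2) * ∑ i, (a i + m i)^2 + ∑ i, u i * (a i + m i)
      + (1-γ) * ∑ k, r k * (v k + h k)
    = (-(σ/2) * ∑ i, a i ^2 + ∑ i, u i * a i + (1-γ) * ∑ k, r k * v k)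
      + ∑ i, (u i - σ * a i) * m i + (1-γ) * ∑ k, r k * h k
      - (σ/2) * ∑ i, m i * m i := by
  have h1 : ∀ i:ι, (a i + m i)^2 = a i^2 + (a i * m i + (a i * m i + m i * m i)) :=
    fun i => by ring
  have h2 : ∀ i:ι, u i * (a i + m i) = u i * a i + u i * m i := fun i => by ring
  have h3 : ∀ k:κ, r k * (v k + h k) = r k * v k + r k * h k := fun k => by ring
  have h4 : ∀ i:ι, (u i - σ * a i) * m i = u i * m i - σ * (a i * m i) := fun i => by ring
  simp only [h1, h2, h3, h4, Finset.sum_add_distrib, Finset.sum_sub_distrib]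
  rw [show (∑ x : ι, σ * (a x * m x)) = σ * ∑ x : ι, a x * m x from (Finset.mul_sum _ _ _).symm]
  ring

/-- Quadratic expansion of `κ` around `V` in the direction `h`. -/
lemma kappa_add' (S A : ℕ) (γ σ : ℝ) (P : Matrix (Fin S × Fin A) (Fin S) ℝ)
    (ρ : Fin S → ℝ) (c w : (Fin S × Fin A) → ℝ) (φ : (Fin S × Fin A) → ℝ)
    (V h : Fin S → ℝ) :
    kappa S A γ σ P ρ c w (V + h) φ =
      kappa S A γ σ P ρ c w V φ
      + ((w - σ • (c + γ • P.mulVec V - (Xi S A).mulVec V - φ)) ⬝ᵥ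
          ((γ • P - Xi S A).mulVec h))
      + (1 - γ) * (ρ ⬝ᵥ h)
      - (σ / 2) * ((γ • P - Xi S A).mulVec h ⬝ᵥ (γ • P - Xi S A).mulVec h) := by
  have key : ∀ p, (c + γ • P.mulVec (V + h) - (Xi S A).mulVec (V + h) - φ) p
      = (c + γ • P.mulVec V - (Xi S A).mulVec V - φ) p + ((γ • P - Xi S A).mulVec h) p := by
    intro p
    simp only [Matrix.mulVec_add, Matrix.sub_mulVec, Matrix.smul_mulVec,
      Pi.add_apply, Pi.sub_apply, Pi.smul_apply, smul_eq_mul]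
    ring
  simp only [kappa, eucNorm_sq', key, dotProduct, Pi.add_apply, Pi.sub_apply,
    Pi.smul_apply, smul_eq_mul]
  exact expand_all' σ γ
    (fun x => c x + γ * (P.mulVec V) x - ((Xi S A).mulVec V) x - φ x)
    (fun x => ((γ • P - Xi S A).mulVec h) x) w ρ V h

/-- for fixed φ, the function V ↦ κ(V,φ) has a unique maximizer
over ℝ^S, namely the unique solution of the normal equations
(γP − Ξ)ᵀ(γP − Ξ) V = (γP − Ξ)ᵀ(w/σ − c + φ) + (1/σ)(1−γ)ρ. -/
theorem kappa_unique_maximizer_V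
    (S A : ℕ) (hS : 0 < S) (hA : 0 < A)
    (γ : ℝ) (hγ0 : 0 < γ) (hγ1 : γ < 1)
    (P : Matrix (Fin S × Fin A) (Fin S) ℝ) (hP : RowStochastic P)
    (ρ : Fin S → ℝ) (hρ0 : ∀ s, 0 ≤ ρ s) (hρ1 : ∑ s, ρ s = 1)
    (c : (Fin S × Fin A) → ℝ) (σ : ℝ) (hσ : 0 < σ) (w : (Fin S × Fin A) → ℝ)
    (φ : (Fin S × Fin A) → ℝ) :
    (∃! V : Fin S → ℝ,
      ((γ • P - Xi S A)ᵀ * (γ • P - Xi S A)).mulVec V =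
        (γ • P - Xi S A)ᵀ.mulVec ((1 / σ) • w - c + φ)
          + ((1 / σ) * (1 - γ)) • ρ) ∧
    ∀ V : Fin S → ℝ,
      ((γ • P - Xi S A)ᵀ * (γ • P - Xi S A)).mulVec V =
        (γ • P - Xi S A)ᵀ.mulVec ((1 / σ) • w - c + φ)
          + ((1 / σ) * (1 - γ)) • ρ →
      ∀ V' : Fin S → ℝ, V' ≠ V →
        kappa S A γ σ P ρ c w V' φ < kappa S A γ σ P ρ c w V φ := by
  set M : Matrix (Fin S × Fin A) (Fin S) ℝ := γ • P - Xi S A with hM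
  -- M has trivial kernel
  have hMker : ∀ V : Fin S → ℝ, M.mulVec V = 0 → V = 0 :=
    fun V h => M_inj' hS hA hγ0 hγ1 hP V h
  -- dot product identity
  have hdot : ∀ v : Fin S → ℝ, v ⬝ᵥ (Mᵀ * M).mulVec v = M.mulVec v ⬝ᵥ M.mulVec v := by
    intro v
    rw [← Matrix.mulVec_mulVec, Matrix.dotProduct_mulVec, Matrix.vecMul_transpose]
  -- MᵀM has trivial kernel
  have hker : ∀ v : Fin S → ℝ, (Mᵀ * M).mulVec v = 0 → v = 0 := by
    intro v hv
    refine hMker v ?_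
    have h2 : M.mulVec v ⬝ᵥ M.mulVec v = 0 := by rw [← hdot, hv, dotProduct_zero]
    funext p
    have hnn : ∀ q ∈ Finset.univ, (0:ℝ) ≤ M.mulVec v q * M.mulVec v q :=
      fun q _ => mul_self_nonneg _
    have := (Finset.sum_eq_zero_iff_of_nonneg hnn).mp h2 p (Finset.mem_univ _)
    simpa [mul_self_eq_zero] using this
  -- injectivity of the linear map of MᵀM
  have hinj : Function.Injective ((Mᵀ * M).mulVecLin) := by
    intro x y hxy
    have : (Mᵀ * M).mulVec (x - y) = 0 := by
      rw [Matrix.mulVec_sub]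
      simp only [Matrix.mulVecLin_apply] at hxy
      rw [hxy, sub_self]
    have := hker _ this
    exact sub_eq_zero.mp this
  have hsurj : Function.Surjective ((Mᵀ * M).mulVecLin) :=
    (LinearMap.injective_iff_surjective).mp hinj
  obtain ⟨V₀, hV₀⟩ := hsurj (Mᵀ.mulVec ((1 / σ) • w - c + φ) + ((1 / σ) * (1 - γ)) • ρ)
  rw [Matrix.mulVecLin_apply] at hV₀
  constructor
  · exact ⟨V₀, hV₀, fun y hy => hinj (by rw [Matrix.mulVecLin_apply, Matrix.mulVecLin_apply,
      hy, hV₀])⟩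
  · intro V hV V' hne
    -- the gradient vanishes at V:  Mᵀ(w − σ g) = −(1−γ)ρ  where g = c + M V − φ
    have hgrad : Mᵀ.mulVec (w - σ • (c + γ • P.mulVec V - (Xi S A).mulVec V - φ))
        = (-(1 - γ)) • ρ := by
      have hMV : γ • P.mulVec V - (Xi S A).mulVec V = M.mulVec V := by
        rw [hM, Matrix.sub_mulVec, Matrix.smul_mulVec]
      have expand : w - σ • (c + γ • P.mulVec V - (Xi S A).mulVec V - φ)
          = w - σ • c - σ • M.mulVec V + σ • φ := by
        rw [show c + γ • P.mulVec V - (Xi S A).mulVec V - φ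
            = c + (γ • P.mulVec V - (Xi S A).mulVec V) - φ by abel, hMV]
        module
      rw [expand]
      rw [Matrix.mulVec_add, Matrix.mulVec_sub, Matrix.mulVec_sub,
        Matrix.mulVec_smul, Matrix.mulVec_smul, Matrix.mulVec_smul,
        Matrix.mulVec_mulVec, hV]
      rw [Matrix.mulVec_add, Matrix.mulVec_sub, Matrix.mulVec_smul]
      have hσ' : σ ≠ 0 := ne_of_gt hσ
      funext s
      simp only [Pi.add_apply, Pi.sub_apply, Pi.smul_apply, Pi.neg_apply, smul_eq_mul]
      field_simp
      ring
    -- write V' = V + h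
    set h : Fin S → ℝ := V' - V with hh
    have hV' : V' = V + h := by rw [hh]; abel
    have hMh : M.mulVec h ≠ 0 := by
      intro hz
      exact hne (by rw [hV', hMker h hz, add_zero])
    rw [hV', kappa_add' S A γ σ P ρ c w φ V h, ← hM]
    -- the linear term vanishes
    have hlin : (w - σ • (c + γ • P.mulVec V - (Xi S A).mulVec V - φ)) ⬝ᵥ M.mulVec h
        + (1 - γ) * (ρ ⬝ᵥ h) = 0 := by
      rw [Matrix.dotProduct_mulVec, ← Matrix.mulVec_transpose, hgrad,
        smul_dotProduct, smul_eq_mul]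
      ring
    have hq : 0 < M.mulVec h ⬝ᵥ M.mulVec h := by
      rcases lt_or_eq_of_le (Finset.sum_nonneg
        (fun i (_ : i ∈ Finset.univ) => mul_self_nonneg (M.mulVec h i))) with hlt | heq
      · exact hlt
      · exact absurd (dotProduct_self_eq_zero.mp heq.symm) hMh
    have : 0 < σ / 2 * (M.mulVec h ⬝ᵥ M.mulVec h) := mul_pos (half_pos hσ) hq
    linarith
end

section
/- Let S and A be positive integers, γ ∈ (0,1), P ∈ ℝ^{SA×S} row-stochastic, ρ ∈ ℝ^S a probability vector, Ξ = 1_A ⊗ I_S, c ∈ ℝ^{SA}, σ > 0, let D be the occupancy polytope, and let C ⊆ ℝ^{SA} be any nonempty, closed, convex set (no feasibility assumption). Given w_0 ∈ ℝ^{SA}, define the Douglas–Rachford iterates: d_k is the unique minimizer of c^⊤ d + (1/(2σ))‖d − w_k‖² over D; z_k is the unique nearest point of C to 2d_k − w_k; w_{k+1} = w_k + (z_k − d_k). Let v be the unique element of the set D − C = {d − z : d ∈ D, z ∈ C} of minimal Euclidean norm. Then w_k − w_{k+1} → v as k → ∞. -/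
open Matrix Filter Topology

noncomputable section DRAux

local notation "⟪" x ", " y "⟫" => @inner ℝ _ _ x y

variable {F : Type*} [NormedAddCommGroup F] [InnerProductSpace ℝ F]

/-- `p` is the metric projection of `x` onto `K`, via variational inequality. -/
def IsProjOn (K : Set F) (x p : F) : Prop :=
  p ∈ K ∧ ∀ w ∈ K, ⟪x - p, w - p⟫ ≤ 0

theorem isProjOn_fne {K : Set F} {x y p q : F} (hp : IsProjOn K x p) (hq : IsProjOn K y q) :
    ‖p - q‖ ^ 2 ≤ ⟪x - y, p - q⟫ := by
  have h1 : (0:ℝ) ≤ ⟪x - p, p - q⟫ := by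
    have := hp.2 q hq.1
    rw [show q - p = -(p - q) by abel, inner_neg_right] at this
    linarith
  have h2 := hq.2 p hp.1
  have hsplit : x - y = (x - p) - (y - q) + (p - q) := by abel
  have : ⟪x - y, p - q⟫ = ⟪x - p, p - q⟫ - ⟪y - q, p - q⟫ + ‖p - q‖^2 := by
    rw [hsplit, inner_add_left, inner_sub_left, real_inner_self_eq_norm_sq]
  linarith

theorem isProjOn_unique {K : Set F} {x p q : F} (hp : IsProjOn K x p) (hq : IsProjOn K x q) :
    p = q := by
  have := isProjOn_fne hp hq
  simp only [sub_self, inner_zero_left] at this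
  have : ‖p - q‖ ^ 2 ≤ 0 := this
  have h0 : ‖p - q‖ = 0 := by nlinarith [norm_nonneg (p - q)]
  rwa [norm_sub_eq_zero_iff] at h0

theorem isProjOn_refl_nonexp {K : Set F} {x y p q : F} (hp : IsProjOn K x p)
    (hq : IsProjOn K y q) :
    ‖((2:ℝ) • p - x) - ((2:ℝ) • q - y)‖ ^ 2 ≤ ‖x - y‖ ^ 2 := by
  have hf := isProjOn_fne hp hq
  have expand : ((2:ℝ) • p - x) - ((2:ℝ) • q - y) = (2:ℝ) • (p - q) - (x - y) := by
    rw [smul_sub]; abel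
  rw [expand, norm_sub_sq_real, norm_smul, real_inner_smul_left]
  have h2 : ‖(2:ℝ)‖ = 2 := by norm_num
  rw [h2]
  nlinarith [hf, real_inner_comm (p - q) (x - y)]

theorem exists_isProjOn [CompleteSpace F] {K : Set F} (hne : K.Nonempty) (hcl : IsClosed K)
    (hcv : Convex ℝ K) (x : F) : ∃ p, IsProjOn K x p := by
  obtain ⟨p, hpK, hp⟩ := exists_norm_eq_iInf_of_complete_convex hne hcl.isComplete hcv x
  exact ⟨p, hpK, (norm_eq_iInf_iff_real_inner_le_zero hcv hpK).1 hp⟩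

/-- one Douglas–Rachford step structure -/
def DRStep (Ds Cs : Set F) (a w d z : F) : Prop :=
  IsProjOn Ds (w - a) d ∧ IsProjOn Cs ((2:ℝ) • d - w) z

theorem drstep_key {Ds Cs : Set F} {a w₁ d₁ z₁ w₂ d₂ z₂ : F}
    (h₁ : DRStep Ds Cs a w₁ d₁ z₁) (h₂ : DRStep Ds Cs a w₂ d₂ z₂) :
    ‖(w₁ + (z₁ - d₁)) - (w₂ + (z₂ - d₂))‖ ^ 2 + ‖(d₁ - z₁) - (d₂ - z₂)‖ ^ 2
      ≤ ‖w₁ - w₂‖ ^ 2 := by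
  set m₁ := (2:ℝ) • d₁ - w₁ with hm₁
  set m₂ := (2:ℝ) • d₂ - w₂ with hm₂
  have hm : ‖m₁ - m₂‖ ^ 2 ≤ ‖w₁ - w₂‖ ^ 2 := by
    have := isProjOn_refl_nonexp h₁.1 h₂.1
    have e1 : ((2:ℝ) • d₁ - (w₁ - a)) - ((2:ℝ) • d₂ - (w₂ - a)) = m₁ - m₂ := by
      rw [hm₁, hm₂]; abel
    have e2 : (w₁ - a) - (w₂ - a) = w₁ - w₂ := by abel
    rwa [e1, e2] at this
  have hr : ‖((2:ℝ) • z₁ - m₁) - ((2:ℝ) • z₂ - m₂)‖ ^ 2 ≤ ‖m₁ - m₂‖ ^ 2 :=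
    isProjOn_refl_nonexp h₁.2 h₂.2
  set b := ((2:ℝ) • z₁ - m₁) - ((2:ℝ) • z₂ - m₂) with hb
  set a' := w₁ - w₂ with ha'
  have e3 : (w₁ + (z₁ - d₁)) - (w₂ + (z₂ - d₂)) = (2⁻¹ : ℝ) • (a' + b) := by
    rw [hb, ha', hm₁, hm₂]; module
  have e4 : (d₁ - z₁) - (d₂ - z₂) = (2⁻¹ : ℝ) • (a' - b) := by
    rw [hb, ha', hm₁, hm₂]; module
  rw [e3, e4, norm_smul, norm_smul]
  have h2 : ‖(2⁻¹:ℝ)‖ = 2⁻¹ := by norm_num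
  rw [h2]
  have hpar := parallelogram_law_with_norm ℝ a' b
  have hble : ‖b‖ ^ 2 ≤ ‖a'‖ ^ 2 := le_trans hr hm
  nlinarith [norm_nonneg (a' + b), norm_nonneg (a' - b)]

theorem quad_vi {K : Set F} (hK : Convex ℝ K) {α : ℝ} (hα : 0 < α) {l m p : F} (hp : p ∈ K)
    (hmin : ∀ q ∈ K, ⟪l, p⟫ + α * ‖p - m‖ ^ 2 ≤ ⟪l, q⟫ + α * ‖q - m‖ ^ 2)
    (q : F) (hq : q ∈ K) :
    0 ≤ ⟪l, q - p⟫ + 2 * α * ⟪p - m, q - p⟫ := by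
  by_contra hcon
  push_neg at hcon
  set A : ℝ := ⟪l, q - p⟫ + 2 * α * ⟪p - m, q - p⟫ with hA
  set B : ℝ := α * ‖q - p‖ ^ 2 with hB
  have hb : 0 ≤ B := by positivity
  have key : ∀ t : ℝ, 0 < t → t ≤ 1 → 0 ≤ A * t + B * t ^ 2 := by
    intro t ht0 ht1
    have hmem : p + t • (q - p) ∈ K := by
      have h := hK hp hq (by linarith : (0:ℝ) ≤ 1 - t) ht0.le (by ring)
      convert h using 1
      module
    have h := hmin _ hmem
    have e1 : ⟪l, p + t • (q - p)⟫ = ⟪l, p⟫ + t * ⟪l, q - p⟫ := by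
      rw [inner_add_right, real_inner_smul_right]
    have e2 : ‖p + t • (q - p) - m‖ ^ 2
        = ‖p - m‖ ^ 2 + 2 * (t * ⟪p - m, q - p⟫) + t ^ 2 * ‖q - p‖ ^ 2 := by
      have : p + t • (q - p) - m = (p - m) + t • (q - p) := by abel
      rw [this, norm_add_sq_real, real_inner_smul_right, norm_smul]
      have : ‖t‖ = t := by rw [Real.norm_eq_abs, abs_of_pos ht0]
      rw [this]; ring
    rw [e1, e2] at h
    rw [hA, hB]
    nlinarith [h]
  have h1 : (2 * B + 1) > 0 := by linarith
  set t : ℝ := min 1 (-A / (2 * B + 1)) with ht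
  have ht0 : 0 < t := lt_min one_pos (div_pos (by linarith) h1)
  have hkey := key t ht0 (min_le_left _ _)
  have htle : t * (2 * B + 1) ≤ -A := by
    rw [← le_div_iff₀ h1]
    exact min_le_right _ _
  have htt := mul_le_mul_of_nonneg_right htle ht0.le
  nlinarith [mul_pos ht0 ht0, mul_neg_of_neg_of_pos hcon ht0]

theorem exists_orbit [CompleteSpace F] {Ds Cs : Set F} (hDne : Ds.Nonempty)
    (hDcl : IsClosed Ds) (hDcv : Convex ℝ Ds) (hCne : Cs.Nonempty) (hCcl : IsClosed Cs)
    (hCcv : Convex ℝ Cs) (a w0 : F) :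
    ∃ W D Z : ℕ → F, W 0 = w0 ∧ ∀ k, DRStep Ds Cs a (W k) (D k) (Z k) ∧
      W (k + 1) = W k + (Z k - D k) := by
  choose pD hpD using exists_isProjOn hDne hDcl hDcv
  choose pC hpC using exists_isProjOn hCne hCcl hCcv
  let W : ℕ → F := fun k => Nat.rec w0
    (fun _ w => w + (pC ((2:ℝ) • pD (w - a) - w) - pD (w - a))) k
  exact ⟨W, fun k => pD (W k - a), fun k => pC ((2:ℝ) • pD (W k - a) - W k), rfl,
    fun k => ⟨⟨hpD _, hpC _⟩, rfl⟩⟩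

set_option maxHeartbeats 1000000 in
theorem abstract_dr [FiniteDimensional ℝ F] {Ds Cs : Set F}
    (hDcl : IsClosed Ds) (hDcv : Convex ℝ Ds) (hDb : ∀ x ∈ Ds, ‖x‖ ≤ 1)
    (hCne : Cs.Nonempty) (hCcl : IsClosed Cs) (hCcv : Convex ℝ Cs)
    (c : F) (σ : ℝ) (hσ : 0 < σ)
    (w d z : ℕ → F)
    (hstep : ∀ k, DRStep Ds Cs (σ • c) (w k) (d k) (z k))
    (hrec : ∀ k, w (k + 1) = w k + (z k - d k))
    {dd zz : F} (hdd : dd ∈ Ds) (hzz : zz ∈ Cs)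
    (hvmin : ∀ p ∈ Ds, ∀ q ∈ Cs, ‖dd - zz‖ ≤ ‖p - q‖) :
    Tendsto (fun k => d k - z k) atTop (𝓝 (dd - zz)) := by
  have hDne : Ds.Nonempty := ⟨dd, hdd⟩
  set v := dd - zz with hv
  set e : ℕ → F := fun k => d k - z k with he
  have hwdiff : ∀ k, w k - w (k + 1) = e k := by
    intro k; rw [hrec k]; simp only [he]; abel
  have hmono : ∀ (w' d' z' : ℕ → F), (∀ k, DRStep Ds Cs (σ • c) (w' k) (d' k) (z' k)) →
      (∀ k, w' (k + 1) = w' k + (z' k - d' k)) →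
      ∀ k, ‖d' (k+1) - z' (k+1)‖ ≤ ‖d' k - z' k‖ := by
    intro w' d' z' hst hrc k
    have key := drstep_key (hst k) (hst (k + 1))
    rw [← hrc k, ← hrc (k + 1)] at key
    have e1 : w' (k+1) - w' (k+2) = d' (k+1) - z' (k+1) := by rw [hrc (k+1)]; abel
    have e0 : w' k - w' (k+1) = d' k - z' k := by rw [hrc k]; abel
    rw [e1, e0] at key
    nlinarith [norm_nonneg (d' (k+1) - z' (k+1)), norm_nonneg (d' k - z' k),
      norm_nonneg ((d' k - z' k) - (d' (k+1) - z' (k+1)))]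
  have hlow : ∀ k, ‖v‖ ≤ ‖e k‖ := fun k => hvmin (d k) (hstep k).1.1 (z k) (hstep k).2.1
  have hAnti : Antitone fun k => ‖e k‖ := antitone_nat_of_succ_le (hmono w d z hstep hrec)
  have hBdd : BddBelow (Set.range fun k => ‖e k‖) :=
    ⟨‖v‖, by rintro x ⟨k, rfl⟩; exact hlow k⟩
  set L := ⨅ k, ‖e k‖ with hLdef
  have hL : Tendsto (fun k => ‖e k‖) atTop (𝓝 L) := tendsto_atTop_ciInf hAnti hBdd
  have hvL : ‖v‖ ≤ L := le_ciInf hlow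
  have hL0 : 0 ≤ L := le_trans (norm_nonneg v) hvL
  -- upper bound on L via perturbed minimizers
  have hub : ∀ ε : ℝ, 0 < ε → L ^ 2 ≤ ‖v‖ ^ 2 + ε * (4 * σ * ‖c‖) := by
    intro ε hε
    -- the perturbed objective
    set h : F × F → ℝ := fun p => (ε * σ) * ⟪c, p.1⟫ + (1/2) * ‖p.1 - p.2‖ ^ 2 with hh
    have hcont : Continuous h := by
      apply Continuous.add
      · exact continuous_const.mul (continuous_const.inner continuous_fst)
      · exact continuous_const.mul ((continuous_fst.sub continuous_snd).norm.pow 2)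
    set M : ℝ := h (dd, zz) with hM
    set Q : ℝ := 2 * |M| + 2 * (ε * σ * ‖c‖) + 1 with hQ
    have hQ0 : 0 < Q := by positivity
    set R : ℝ := max ‖zz‖ (1 + Real.sqrt Q) with hR
    have hDcomp : IsCompact Ds := by
      apply Metric.isCompact_of_isClosed_isBounded hDcl
      apply Bornology.IsBounded.subset (Metric.isBounded_closedBall (x := (0:F)) (r := 1))
      intro x hx
      simpa [Metric.mem_closedBall, dist_zero_right] using hDb x hx
    have hKcomp : IsCompact (Ds ×ˢ (Cs ∩ Metric.closedBall 0 R)) := by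
      apply hDcomp.prod
      exact Metric.isCompact_of_isClosed_isBounded (hCcl.inter Metric.isClosed_closedBall)
        (Metric.isBounded_closedBall.subset Set.inter_subset_right)
    have hKne : (dd, zz) ∈ Ds ×ˢ (Cs ∩ Metric.closedBall 0 R) := by
      refine ⟨hdd, hzz, ?_⟩
      simp only [Metric.mem_closedBall, dist_zero_right]
      exact le_max_left _ _
    obtain ⟨⟨dh, zh⟩, hmemK, hminK⟩ :=
      hKcomp.exists_isMinOn ⟨_, hKne⟩ hcont.continuousOn
    have hdhD : dh ∈ Ds := hmemK.1
    have hzhC : zh ∈ Cs := hmemK.2.1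
    have hhM : h (dh, zh) ≤ M := hminK hKne
    clear_value M Q R
    -- global minimality
    have hglob : ∀ p ∈ Ds, ∀ q ∈ Cs, h (dh, zh) ≤ h (p, q) := by
      intro p hp q hq
      by_cases hqR : ‖q‖ ≤ R
      · exact hminK ⟨hp, hq, by simpa [Metric.mem_closedBall, dist_zero_right] using hqR⟩
      · push_neg at hqR
        have hq1 : 1 + Real.sqrt Q < ‖q‖ := by
          have hle := le_max_right ‖zz‖ (1 + Real.sqrt Q)
          rw [← hR] at hle
          exact lt_of_le_of_lt hle hqR
        have hsq : Real.sqrt Q < ‖q‖ - 1 := by linarith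
        have hQlt : Q < (‖q‖ - 1) ^ 2 := by
          have h0 : (0:ℝ) ≤ Real.sqrt Q := Real.sqrt_nonneg _
          nlinarith [Real.sq_sqrt hQ0.le]
        have hip : -(ε * σ * ‖c‖) ≤ (ε * σ) * ⟪c, p⟫ := by
          have h1 : |⟪c, p⟫| ≤ ‖c‖ * ‖p‖ := abs_real_inner_le_norm c p
          have h2 : ‖p‖ ≤ 1 := hDb p hp
          have h3 : -‖c‖ ≤ ⟪c, p⟫ := by
            nlinarith [abs_le.1 h1, norm_nonneg c]
          have h4 := mul_le_mul_of_nonneg_left h3 (le_of_lt (mul_pos hε hσ))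
          nlinarith [h4]
        have hpq : ‖q‖ - 1 ≤ ‖p - q‖ := by
          have := norm_sub_norm_le q p
          have h2 : ‖p‖ ≤ 1 := hDb p hp
          rw [norm_sub_rev] at this
          linarith [abs_le.1 (abs_norm_sub_norm_le p q)]
        have hq10 : (0:ℝ) ≤ ‖q‖ - 1 := le_trans (by positivity) hsq.le
        have hpq2 : (‖q‖ - 1) ^ 2 ≤ ‖p - q‖ ^ 2 := by nlinarith [norm_nonneg (p - q)]
        have hQlt' : 2 * |M| + 2 * (ε * σ * ‖c‖) + 1 < (‖q‖ - 1) ^ 2 := by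
          rw [← hQ]; exact hQlt
        have : M < h (p, q) := by
          simp only [hh]
          have habs : M ≤ |M| := le_abs_self M
          have ha2 : (0:ℝ) ≤ |M| - M := by linarith
          nlinarith [habs, hip, hpq2, hQlt', ha2]
        linarith
    -- variational inequalities at (dh, zh)
    set u := dh - zh with hu
    have hVd : ∀ p ∈ Ds, 0 ≤ ε * σ * ⟪c, p - dh⟫ + ⟪u, p - dh⟫ := by
      intro p hp
      have hmin' : ∀ q ∈ Ds, ⟪(ε * σ) • c, dh⟫ + (1/2) * ‖dh - zh‖ ^ 2
          ≤ ⟪(ε * σ) • c, q⟫ + (1/2) * ‖q - zh‖ ^ 2 := by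
        intro q hq
        have := hglob q hq zh hzhC
        simpa only [hh, real_inner_smul_left] using this
      have := quad_vi hDcv (by norm_num : (0:ℝ) < 1/2) hdhD hmin' p hp
      rw [real_inner_smul_left] at this
      linarith [this]
    have hVz : ∀ q ∈ Cs, ⟪u, q - zh⟫ ≤ 0 := by
      intro q hq
      have hmin' : ∀ q' ∈ Cs, ⟪(0:F), zh⟫ + (1/2) * ‖zh - dh‖ ^ 2
          ≤ ⟪(0:F), q'⟫ + (1/2) * ‖q' - dh‖ ^ 2 := by
        intro q' hq'
        have := hglob dh hdhD q' hq'
        simp only [hh, inner_zero_left, zero_add] at this ⊢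
        rw [norm_sub_rev zh dh, norm_sub_rev q' dh]
        linarith
      have := quad_vi hCcv (by norm_num : (0:ℝ) < 1/2) hzhC hmin' q hq
      simp only [inner_zero_left, zero_add] at this
      have e1 : ⟪zh - dh, q - zh⟫ = -⟪u, q - zh⟫ := by
        rw [hu, show zh - dh = -(dh - zh) by abel, inner_neg_left]
      rw [e1] at this
      linarith
    -- norm bound on u
    have hu2 : ‖u‖ ^ 2 ≤ ‖v‖ ^ 2 + ε * (4 * σ * ‖c‖) := by
      have h1 := hhM
      rw [hM] at h1
      simp only [hh] at h1
      rw [← hu, ← hv] at h1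
      have h2 : |⟪c, dh⟫| ≤ ‖c‖ := by
        have := abs_real_inner_le_norm c dh
        nlinarith [hDb dh hdhD, norm_nonneg c, abs_nonneg (⟪c, dh⟫ : ℝ)]
      have h3 : |⟪c, dd⟫| ≤ ‖c‖ := by
        have := abs_real_inner_le_norm c dd
        nlinarith [hDb dd hdd, norm_nonneg c, abs_nonneg (⟪c, dd⟫ : ℝ)]
      have k1 := mul_le_mul_of_nonneg_left (abs_le.1 h2).1 (le_of_lt (mul_pos hε hσ))
      have k2 := mul_le_mul_of_nonneg_left (abs_le.1 h3).2 (le_of_lt (mul_pos hε hσ))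
      nlinarith [k1, k2, norm_nonneg c]
    -- DR step at wstar
    set wstar := dh - ε⁻¹ • u with hwstar
    have hstar : DRStep Ds Cs (σ • c) wstar dh zh := by
      constructor
      · refine ⟨hdhD, fun p hp => ?_⟩
        have e1 : wstar - σ • c - dh = -(ε⁻¹ • u) - σ • c := by rw [hwstar]; abel
        rw [e1, inner_sub_left, inner_neg_left, real_inner_smul_left, real_inner_smul_left]
        have hthis := hVd p hp
        have hεinv : 0 < ε⁻¹ := by positivity
        have key : -(ε⁻¹ * ⟪u, p - dh⟫) - σ * ⟪c, p - dh⟫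
            = -(ε⁻¹ * (ε * σ * ⟪c, p - dh⟫ + ⟪u, p - dh⟫)) := by
          field_simp
          ring
        rw [key]
        exact neg_nonpos_of_nonneg (mul_nonneg hεinv.le hthis)
      · refine ⟨hzhC, fun q hq => ?_⟩
        have e1 : (2:ℝ) • dh - wstar - zh = u + ε⁻¹ • u := by
          rw [hwstar, hu]; module
        rw [e1, inner_add_left, real_inner_smul_left]
        have := hVz q hq
        have hεinv : 0 < ε⁻¹ := by positivity
        nlinarith [this]
    -- comparison orbit
    obtain ⟨W, D2, Z2, hW0, hWstep⟩ :=
      exists_orbit hDne hDcl hDcv hCne hCcl hCcv (σ • c) wstar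
    set f : ℕ → F := fun k => D2 k - Z2 k with hf
    have hf0 : f 0 = u := by
      have hD20 : D2 0 = dh := by
        apply isProjOn_unique (hWstep 0).1.1
        rw [hW0]; exact hstar.1
      have hZ20 : Z2 0 = zh := by
        apply isProjOn_unique (hWstep 0).1.2
        rw [hW0, hD20]; exact hstar.2
      rw [hf]; simp only [hD20, hZ20, hu]
    have hfle : ∀ k, ‖f k‖ ≤ ‖u‖ := by
      intro k
      induction k with
      | zero => exact le_of_eq (by rw [hf0])
      | succ n ih => exact le_trans (hmono W D2 Z2 (fun j => (hWstep j).1) (fun j => (hWstep j).2) n) ih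
    -- cross-orbit: ‖e k - f k‖ → 0
    set g : ℕ → ℝ := fun k => ‖w k - W k‖ ^ 2 with hg
    have hgstep : ∀ k, g (k + 1) + ‖e k - f k‖ ^ 2 ≤ g k := by
      intro k
      have key := drstep_key (hstep k) (hWstep k).1
      rw [← hrec k, ← (hWstep k).2] at key
      exact key
    have hganti : Antitone g := antitone_nat_of_succ_le fun k => by
      have := hgstep k
      nlinarith [norm_nonneg (e k - f k)]
    have hgbdd : BddBelow (Set.range g) := ⟨0, by rintro x ⟨k, rfl⟩; positivity⟩
    have hgtend : Tendsto g atTop (𝓝 (⨅ k, g k)) := tendsto_atTop_ciInf hganti hgbdd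
    have hgdiff : Tendsto (fun k => g k - g (k + 1)) atTop (𝓝 0) := by
      have h2 : Tendsto (fun k => g (k + 1)) atTop (𝓝 (⨅ k, g k)) :=
        hgtend.comp (tendsto_add_atTop_nat 1)
      simpa using hgtend.sub h2
    have hef2 : Tendsto (fun k => ‖e k - f k‖ ^ 2) atTop (𝓝 0) := by
      apply squeeze_zero (fun k => by positivity) (fun k => by linarith [hgstep k]) hgdiff
    have hef : Tendsto (fun k => ‖e k - f k‖) atTop (𝓝 0) := by
      have := (Real.continuous_sqrt.tendsto 0).comp hef2
      simp only [Function.comp_def, Real.sqrt_zero] at this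
      convert this using 2 with k
      rw [Real.sqrt_sq (norm_nonneg _)]
    -- L ≤ ‖u‖
    have hLu : L ≤ ‖u‖ := by
      have hub' : Tendsto (fun k => ‖u‖ + ‖e k - f k‖) atTop (𝓝 (‖u‖ + 0)) :=
        tendsto_const_nhds.add hef
      rw [add_zero] at hub'
      refine le_of_tendsto_of_tendsto' hL hub' fun k => ?_
      calc ‖e k‖ ≤ ‖f k‖ + ‖e k - f k‖ := by
            have := norm_add_le (f k) (e k - f k)
            simpa [add_sub_cancel] using this
        _ ≤ ‖u‖ + ‖e k - f k‖ := by linarith [hfle k]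
    nlinarith [hLu, norm_nonneg u]
  -- L = ‖v‖
  have hL2 : L ^ 2 ≤ ‖v‖ ^ 2 := by
    by_contra hc
    push_neg at hc
    set δ := L ^ 2 - ‖v‖ ^ 2 with hδ
    have hδ0 : 0 < δ := by linarith
    have := hub (δ / (4 * σ * ‖c‖ + 1)) (by positivity)
    have hden : (0:ℝ) < 4 * σ * ‖c‖ + 1 := by positivity
    have : δ / (4 * σ * ‖c‖ + 1) * (4 * σ * ‖c‖) < δ := by
      rw [div_mul_eq_mul_div, div_lt_iff₀ hden]
      nlinarith [norm_nonneg c]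
    linarith
  have hLv : L = ‖v‖ := by nlinarith [hvL, norm_nonneg v]
  -- conclusion via parallelogram law
  have hmid : ∀ k, 2 * ‖v‖ ≤ ‖e k + v‖ := by
    intro k
    have hp : (2⁻¹:ℝ) • d k + (2⁻¹:ℝ) • dd ∈ Ds :=
      hDcv (hstep k).1.1 hdd (by norm_num) (by norm_num) (by norm_num)
    have hq : (2⁻¹:ℝ) • z k + (2⁻¹:ℝ) • zz ∈ Cs :=
      hCcv (hstep k).2.1 hzz (by norm_num) (by norm_num) (by norm_num)
    have := hvmin _ hp _ hq
    have e1 : ((2⁻¹:ℝ) • d k + (2⁻¹:ℝ) • dd) - ((2⁻¹:ℝ) • z k + (2⁻¹:ℝ) • zz)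
        = (2⁻¹:ℝ) • (e k + v) := by
      rw [he, hv]; module
    rw [e1, norm_smul] at this
    have h2 : ‖(2⁻¹:ℝ)‖ = 2⁻¹ := by norm_num
    rw [h2] at this
    linarith
  have hsq : Tendsto (fun k => ‖e k - v‖ ^ 2) atTop (𝓝 0) := by
    have hupper : ∀ k, ‖e k - v‖ ^ 2 ≤ 2 * ‖e k‖ ^ 2 - 2 * ‖v‖ ^ 2 := by
      intro k
      have hpar := parallelogram_law_with_norm ℝ (e k) v
      have := hmid k
      nlinarith [norm_nonneg (e k + v), norm_nonneg v]
    have htend : Tendsto (fun k => 2 * ‖e k‖ ^ 2 - 2 * ‖v‖ ^ 2) atTop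
        (𝓝 (2 * L ^ 2 - 2 * ‖v‖ ^ 2)) :=
      (tendsto_const_nhds.mul (hL.pow 2)).sub tendsto_const_nhds
    rw [hLv, sub_self] at htend
    exact squeeze_zero (fun k => by positivity) hupper htend
  have hnorm : Tendsto (fun k => ‖e k - v‖) atTop (𝓝 0) := by
    have := (Real.continuous_sqrt.tendsto 0).comp hsq
    simp only [Function.comp_def, Real.sqrt_zero] at this
    convert this using 2 with k
    rw [Real.sqrt_sq (norm_nonneg _)]
  exact tendsto_iff_norm_sub_tendsto_zero.2 hnorm

end DRAux


section Transfer

local notation "⟪" x ", " y "⟫" => @inner ℝ _ _ x y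

theorem eucNorm_eq_norm {ι : Type*} [Fintype ι] (x : ι → ℝ) :
    eucNorm x = ‖((WithLp.equiv 2 (ι → ℝ)).symm x : EuclideanSpace ℝ ι)‖ := by
  rw [EuclideanSpace.norm_eq, eucNorm]
  congr 1
  apply Finset.sum_congr rfl
  intro i _
  rw [Real.norm_eq_abs, sq_abs]
  rfl

theorem inner_symm_eq_sum {ι : Type*} [Fintype ι] (x y : ι → ℝ) :
    ⟪((WithLp.equiv 2 (ι → ℝ)).symm x : EuclideanSpace ℝ ι),
      ((WithLp.equiv 2 (ι → ℝ)).symm y : EuclideanSpace ℝ ι)⟫ = ∑ i, x i * y i := by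
  rw [PiLp.inner_apply]
  apply Finset.sum_congr rfl
  intro i _
  simp [RCLike.inner_apply, conj_trivial, mul_comm]

end Transfer

section OccDProps

variable {S A : ℕ} {γ : ℝ} {P : Matrix (Fin S × Fin A) (Fin S) ℝ} {ρ : Fin S → ℝ}

theorem occD_convex : Convex ℝ (OccD S A γ P ρ) := by
  intro x hx y hy a b ha hb hab
  constructor
  · intro p
    have := hx.1 p
    have := hy.1 p
    simp only [Pi.add_apply, Pi.smul_apply, smul_eq_mul]
    nlinarith [mul_nonneg ha (hx.1 p), mul_nonneg hb (hy.1 p)]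
  · intro s
    simp only [Pi.add_apply, Pi.smul_apply, smul_eq_mul]
    rw [Finset.sum_add_distrib, ← Finset.mul_sum, ← Finset.mul_sum, hx.2 s, hy.2 s]
    have hre : ∑ p : Fin S × Fin A, P p s * (a * x p + b * y p)
        = a * ∑ p : Fin S × Fin A, P p s * x p + b * ∑ p : Fin S × Fin A, P p s * y p := by
      rw [Finset.mul_sum, Finset.mul_sum, ← Finset.sum_add_distrib]
      apply Finset.sum_congr rfl
      intro p _
      ring
    rw [hre]
    linear_combination (1 - γ) * ρ s * hab

theorem occD_closed : IsClosed (OccD S A γ P ρ) := by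
  have : OccD S A γ P ρ = (⋂ p, {d : (Fin S × Fin A) → ℝ | 0 ≤ d p}) ∩
      ⋂ s, {d : (Fin S × Fin A) → ℝ |
        ∑ a, d (s, a) = (1 - γ) * ρ s + γ * ∑ p : Fin S × Fin A, P p s * d p} := by
    ext x
    simp [OccD, Set.mem_iInter]
  rw [this]
  apply IsClosed.inter
  · exact isClosed_iInter fun p => isClosed_le continuous_const (continuous_apply p)
  · refine isClosed_iInter fun s => isClosed_eq ?_ ?_
    · exact continuous_finset_sum _ fun a _ => continuous_apply (s, a)
    · apply Continuous.add continuous_const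
      apply Continuous.mul continuous_const
      exact continuous_finset_sum _ fun p _ => continuous_const.mul (continuous_apply p)
  
theorem occD_sum_one (hγ1 : γ < 1) (hP : RowStochastic P) (hρ1 : ∑ s, ρ s = 1)
    {x : (Fin S × Fin A) → ℝ} (hx : x ∈ OccD S A γ P ρ) : ∑ p, x p = 1 := by
  have h1 : ∑ p : Fin S × Fin A, x p = ∑ s, ∑ a, x (s, a) := Fintype.sum_prod_type x
  have h2 : ∑ s, ∑ a, x (s, a)
      = (1 - γ) * (∑ s, ρ s) + γ * ∑ s, ∑ p : Fin S × Fin A, P p s * x p := by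
    rw [Finset.mul_sum, Finset.mul_sum, ← Finset.sum_add_distrib]
    exact Finset.sum_congr rfl fun s _ => hx.2 s
  have h3 : ∑ s, ∑ p : Fin S × Fin A, P p s * x p = ∑ p : Fin S × Fin A, x p := by
    rw [Finset.sum_comm]
    apply Finset.sum_congr rfl
    intro p _
    rw [← Finset.sum_mul, hP.2 p, one_mul]
  rw [h2, h3, hρ1, mul_one] at h1
  have hne : (1 : ℝ) - γ ≠ 0 := by linarith
  have : (1 - γ) * (∑ p : Fin S × Fin A, x p) = (1 - γ) * 1 := by linarith
  exact mul_left_cancel₀ hne (by linarith [this])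

theorem occD_eucNorm_le (hγ1 : γ < 1) (hP : RowStochastic P) (hρ1 : ∑ s, ρ s = 1)
    {x : (Fin S × Fin A) → ℝ} (hx : x ∈ OccD S A γ P ρ) : eucNorm x ≤ 1 := by
  have hsum := occD_sum_one hγ1 hP hρ1 hx
  have h2 : ∑ p, x p ^ 2 ≤ 1 := by
    calc ∑ p, x p ^ 2 ≤ ∑ p, x p * (∑ q, x q) := by
          apply Finset.sum_le_sum
          intro i _
          have hle : x i ≤ ∑ q, x q :=
            Finset.single_le_sum (fun q _ => hx.1 q) (Finset.mem_univ i)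
          nlinarith [hx.1 i]
      _ = (∑ p, x p) * (∑ q, x q) := by rw [← Finset.sum_mul]
      _ = 1 := by rw [hsum, one_mul]
  rw [eucNorm]
  calc Real.sqrt (∑ i, x i ^ 2) ≤ Real.sqrt 1 := Real.sqrt_le_sqrt h2
    _ = 1 := Real.sqrt_one

end OccDProps

section Final

local notation "⟪" x ", " y "⟫" => @inner ℝ _ _ x y

set_option maxHeartbeats 1000000 in
/-- the differences of the Douglas–Rachford governing sequence
converge to the minimal displacement vector v, the minimal-norm element of
D − C, regardless of feasibility. -/
theorem dra_governing_difference_tendsto_minimal_displacement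
    (S A : ℕ) (hS : 0 < S) (hA : 0 < A)
    (γ : ℝ) (hγ0 : 0 < γ) (hγ1 : γ < 1)
    (P : Matrix (Fin S × Fin A) (Fin S) ℝ) (hP : RowStochastic P)
    (ρ : Fin S → ℝ) (hρ0 : ∀ s, 0 ≤ ρ s) (hρ1 : ∑ s, ρ s = 1)
    (c : (Fin S × Fin A) → ℝ) (σ : ℝ) (hσ : 0 < σ)
    (C : Set ((Fin S × Fin A) → ℝ))
    (hCne : C.Nonempty) (hCclosed : IsClosed C) (hCconvex : Convex ℝ C)
    (w0 : (Fin S × Fin A) → ℝ)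
    (d z wseq : ℕ → (Fin S × Fin A) → ℝ)
    (hw0 : wseq 0 = w0)
    (hd : ∀ k : ℕ, d k ∈ OccD S A γ P ρ ∧
      ∀ d' ∈ OccD S A γ P ρ,
        regObj σ c (wseq k) (d k) ≤ regObj σ c (wseq k) d')
    (hz : ∀ k : ℕ, z k ∈ C ∧
      ∀ z' ∈ C,
        eucNorm (z k - ((2 : ℝ) • d k - wseq k)) ≤
          eucNorm (z' - ((2 : ℝ) • d k - wseq k)))
    (hw : ∀ k : ℕ, wseq (k + 1) = wseq k + (z k - d k))
    (v : (Fin S × Fin A) → ℝ)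
    (hvmem : ∃ dd ∈ OccD S A γ P ρ, ∃ zz ∈ C, v = dd - zz)
    (hvmin : ∀ u : (Fin S × Fin A) → ℝ,
      (∃ dd ∈ OccD S A γ P ρ, ∃ zz ∈ C, u = dd - zz) →
        eucNorm v ≤ eucNorm u) :
    Tendsto (fun k => wseq k - wseq (k + 1)) atTop (𝓝 v) := by
  classical
  obtain ⟨dd, hddD, zz, hzzC, hveq⟩ := hvmem
  set Φ : ((Fin S × Fin A) → ℝ) → EuclideanSpace ℝ (Fin S × Fin A) :=
    fun x => (WithLp.equiv 2 ((Fin S × Fin A) → ℝ)).symm x with hΦ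
  set Ψ : EuclideanSpace ℝ (Fin S × Fin A) → ((Fin S × Fin A) → ℝ) :=
    fun x => WithLp.equiv 2 ((Fin S × Fin A) → ℝ) x with hΨ
  have hΨcont : Continuous Ψ := PiLp.continuous_ofLp 2 _
  set Ds : Set (EuclideanSpace ℝ (Fin S × Fin A)) := Ψ ⁻¹' (OccD S A γ P ρ) with hDs
  set Cs : Set (EuclideanSpace ℝ (Fin S × Fin A)) := Ψ ⁻¹' C with hCs
  have hDclE : IsClosed Ds := occD_closed.preimage hΨcont
  have hCclE : IsClosed Cs := hCclosed.preimage hΨcont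
  have hCneE : Cs.Nonempty := by
    obtain ⟨c0, hc0⟩ := hCne
    exact ⟨Φ c0, hc0⟩
  have hDcvE : Convex ℝ Ds := by
    intro x hx y hy a b ha hb hab
    exact occD_convex hx hy ha hb hab
  have hCcvE : Convex ℝ Cs := by
    intro x hx y hy a b ha hb hab
    exact hCconvex hx hy ha hb hab
  have hDbE : ∀ y ∈ Ds, ‖y‖ ≤ 1 := by
    intro y hy
    have h1 : eucNorm (Ψ y) ≤ 1 := occD_eucNorm_le hγ1 hP hρ1 hy
    have h2 : eucNorm (Ψ y) = ‖y‖ := by rw [eucNorm_eq_norm]; rfl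
    rwa [h2] at h1
  set wE : ℕ → EuclideanSpace ℝ (Fin S × Fin A) := fun k => Φ (wseq k) with hwE
  set dE : ℕ → EuclideanSpace ℝ (Fin S × Fin A) := fun k => Φ (d k) with hdE
  set zE : ℕ → EuclideanSpace ℝ (Fin S × Fin A) := fun k => Φ (z k) with hzE
  have hsum_inner : ∀ x y : (Fin S × Fin A) → ℝ, (∑ p, x p * y p) = ⟪Φ x, Φ y⟫ :=
    fun x y => (inner_symm_eq_sum x y).symm
  have hstepE : ∀ k, DRStep Ds Cs (σ • Φ c) (wE k) (dE k) (zE k) := by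
    intro k
    constructor
    · refine ⟨(hd k).1, ?_⟩
      intro p hp
      have hmin' : ∀ q ∈ Ds, ⟪Φ c, dE k⟫ + 1 / (2 * σ) * ‖dE k - wE k‖ ^ 2
          ≤ ⟪Φ c, q⟫ + 1 / (2 * σ) * ‖q - wE k‖ ^ 2 := by
        intro q hq
        have hthis := (hd k).2 (Ψ q) hq
        rw [regObj, regObj] at hthis
        rw [hsum_inner c (d k), hsum_inner c (Ψ q)] at hthis
        have a1 : eucNorm (d k - wseq k) = ‖dE k - wE k‖ := by rw [eucNorm_eq_norm]; rfl
        have a2 : eucNorm (Ψ q - wseq k) = ‖q - wE k‖ := by rw [eucNorm_eq_norm]; rfl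
        rw [a1, a2] at hthis
        exact hthis
      have hq0 := quad_vi hDcvE (by positivity : (0:ℝ) < 1 / (2 * σ)) (show dE k ∈ Ds from (hd k).1) hmin' p hp
      have hflip : ⟪dE k - wE k, p - dE k⟫ = -⟪wE k - dE k, p - dE k⟫ := by
        rw [show dE k - wE k = -(wE k - dE k) by abel, inner_neg_left]
      have hσ2 : 2 * (1 / (2 * σ)) = σ⁻¹ := by field_simp
      rw [hflip, hσ2] at hq0
      have egoal : wE k - σ • Φ c - dE k = -(σ • Φ c) + (wE k - dE k) := by abel
      rw [egoal, inner_add_left, inner_neg_left, real_inner_smul_left]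
      have hY : σ⁻¹ * ⟪wE k - dE k, p - dE k⟫ ≤ ⟪Φ c, p - dE k⟫ := by linarith
      have h5 := mul_le_mul_of_nonneg_left hY hσ.le
      rw [← mul_assoc, mul_inv_cancel₀ (ne_of_gt hσ), one_mul] at h5
      linarith
    · refine ⟨(hz k).1, ?_⟩
      intro q hq
      have hmin' : ∀ q' ∈ Cs, ⟪(0 : EuclideanSpace ℝ (Fin S × Fin A)), zE k⟫
            + 1 * ‖zE k - ((2:ℝ) • dE k - wE k)‖ ^ 2
          ≤ ⟪(0 : EuclideanSpace ℝ (Fin S × Fin A)), q'⟫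
            + 1 * ‖q' - ((2:ℝ) • dE k - wE k)‖ ^ 2 := by
        intro q' hq'
        simp only [inner_zero_left, zero_add, one_mul]
        have h := (hz k).2 (Ψ q') hq'
        have a1 : eucNorm (z k - ((2:ℝ) • d k - wseq k))
            = ‖zE k - ((2:ℝ) • dE k - wE k)‖ := by rw [eucNorm_eq_norm]; rfl
        have a2 : eucNorm (Ψ q' - ((2:ℝ) • d k - wseq k))
            = ‖q' - ((2:ℝ) • dE k - wE k)‖ := by rw [eucNorm_eq_norm]; rfl
        rw [a1, a2] at h
        nlinarith [h, norm_nonneg (zE k - ((2:ℝ) • dE k - wE k)),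
          norm_nonneg (q' - ((2:ℝ) • dE k - wE k))]
      have hq0 := quad_vi hCcvE one_pos (show zE k ∈ Cs from (hz k).1) hmin' q hq
      simp only [inner_zero_left, zero_add] at hq0
      have e1 : (2:ℝ) • dE k - wE k - zE k = -(zE k - ((2:ℝ) • dE k - wE k)) := by abel
      rw [e1, inner_neg_left]
      linarith
  have hrecE : ∀ k, wE (k + 1) = wE k + (zE k - dE k) := by
    intro k
    show Φ (wseq (k + 1)) = _
    rw [hw k]
    rfl
  have hddE : Φ dd ∈ Ds := hddD
  have hzzE : Φ zz ∈ Cs := hzzC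
  have hvminE : ∀ p ∈ Ds, ∀ q ∈ Cs, ‖Φ dd - Φ zz‖ ≤ ‖p - q‖ := by
    intro p hp q hq
    have h := hvmin (Ψ p - Ψ q) ⟨Ψ p, hp, Ψ q, hq, rfl⟩
    have b1 : eucNorm v = ‖Φ dd - Φ zz‖ := by rw [hveq, eucNorm_eq_norm]; rfl
    have b2 : eucNorm (Ψ p - Ψ q) = ‖p - q‖ := by rw [eucNorm_eq_norm]; rfl
    rwa [b1, b2] at h
  have hT := abstract_dr hDclE hDcvE hDbE hCneE hCclE hCcvE (Φ c) σ hσ wE dE zE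
    hstepE hrecE hddE hzzE hvminE
  have hfun : (fun k => wseq k - wseq (k + 1)) = fun k => d k - z k := by
    funext k
    rw [hw k]
    abel
  rw [hfun]
  have h2 := (hΨcont.tendsto (Φ dd - Φ zz)).comp hT
  have e1 : Ψ ∘ (fun k => dE k - zE k) = fun k => d k - z k := rfl
  have e2 : Ψ (Φ dd - Φ zz) = v := by rw [hveq]; rfl
  rw [e1, e2] at h2
  exact h2


end Final
end
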